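/- As n → ∞, the average-case approximation ratio of mechanism P converges to the same constant as mechanism K: lim_{n→∞} r_n(P) = (∑_{j=1}^m (E_{t∼D^j}[1/t])^{-1}) / (∑_{j=1}^m t^j_min). -/

import Mathlib

/-!
Almost surely, `SC_P(t^j)` (the harmonic mean of the costs) tends to `(E[1/t])⁻¹` by the strong
law of large numbers for `1/t`, and `min_i t_i^j` tends to `t^j_min` because `D^j` charges every
interval `[t^j_min, t^j_min + δ]`; hence the ratio converges almost surely. To pass to the
expectation: the ratio is always at most `n`, and it is bounded by a constant unless, on some
task, at most half the expected number `p_j n` of costs fall below `t^j_min + 1`. By Hoeffding's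
inequality that happens with probability `O(e^{-cn})`, so the mass of the ratio above a fixed
truncation level is `O(n e^{-cn}) → 0`, while the truncated ratio converges by dominated
convergence.
-/

open MeasureTheory ProbabilityTheory Finset Filter Topology
open scoped ENNReal

/-- Social cost of mechanism P on a cost vector `t`:
`SC_P(t) = ∑_k p_k^P t_k = n / (∑_k 1/t_k)` where `p_k^P = (1/t_k) / (∑_i 1/t_i)`. -/
noncomputable def SCP (n : ℕ) (t : Fin n → ℝ) : ℝ :=
  (n : ℝ) / (∑ k, 1 / t k)

section Probability

variable {Ω β : Type*} [MeasurableSpace Ω] [MeasurableSpace β] {μ : Measure Ω}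

lemma ProbabilityTheory.iIndepFun.measure_iInter_preimage_eq_zero {Y : ℕ → Ω → β}
    (hind : iIndepFun Y μ) {S : Set β} (hS : MeasurableSet S) {q : ℝ≥0∞} (hq : q < 1)
    (hYS : ∀ i, μ (Y i ⁻¹' S) ≤ q) : μ (⋂ i, Y i ⁻¹' S) = 0 := by
  have hle (n : ℕ) : μ (⋂ i, Y i ⁻¹' S) ≤ q ^ n := calc
    μ (⋂ i, Y i ⁻¹' S) ≤ μ (⋂ i ∈ range n, Y i ⁻¹' S) :=
      measure_mono (Set.subset_iInter₂ fun i _ => Set.iInter_subset _ i)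
    _ = ∏ i ∈ range n, μ (Y i ⁻¹' S) := hind.measure_inter_preimage_eq_mul _ fun _ _ => hS
    _ ≤ q ^ n := by
      simpa using Finset.prod_le_prod' (s := range n) fun i _ => hYS i
  exact le_antisymm (ge_of_tendsto' (ENNReal.tendsto_pow_atTop_nhds_zero_of_lt_one hq) hle)
    zero_le

lemma ae_le_of_measure_Iio_eq_zero {ν : Measure ℝ} {a : ℝ} (hν : ν (Set.Iio a) = 0) :
    ∀ᵐ t ∂ν, a ≤ t :=
  (measure_eq_zero_iff_ae_notMem.1 hν).mono fun _ ht => not_lt.1 ht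

lemma ae_le_of_map_eq {Y : Ω → ℝ} (hY : Measurable Y) {ν : Measure ℝ} (hlaw : μ.map Y = ν)
    {a : ℝ} (hν : ν (Set.Iio a) = 0) : ∀ᵐ ω ∂μ, a ≤ Y ω :=
  ae_of_ae_map hY.aemeasurable (hlaw ▸ ae_le_of_measure_Iio_eq_zero hν)

lemma ae_tendsto_iInf_fin [IsProbabilityMeasure μ] {Y : ℕ → Ω → ℝ} (hind : iIndepFun Y μ)
    (hY : ∀ i, Measurable (Y i)) {ν : Measure ℝ} [IsProbabilityMeasure ν]
    (hlaw : ∀ i, μ.map (Y i) = ν) {a : ℝ}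
    (hlb : ∀ᵐ ω ∂μ, ∀ i, a ≤ Y i ω) (hν : ∀ c, a < c → 0 < ν (Set.Iic c)) :
    ∀ᵐ ω ∂μ, Tendsto (fun n => ⨅ i : Fin n, Y i ω) atTop (𝓝 a) := by
  have hhit (k : ℕ) : ∀ᵐ ω ∂μ, ∃ i, Y i ω ≤ a + 1 / (k + 1) := by
    set c := a + 1 / ((k : ℝ) + 1)
    have hq : ν (Set.Ioi c) < 1 := by
      rw [← Set.compl_Iic, prob_compl_eq_one_sub measurableSet_Iic]
      exact ENNReal.sub_lt_self ENNReal.one_ne_top one_ne_zero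
        (hν c (by simp only [c]; linarith [Nat.one_div_pos_of_nat (n := k) (α := ℝ)])).ne'
    have hnull := hind.measure_iInter_preimage_eq_zero measurableSet_Ioi hq fun i => by
      rw [← hlaw i, Measure.map_apply (hY i) measurableSet_Ioi]
    have hmiss : {ω | ¬∃ i, Y i ω ≤ c} = ⋂ i, Y i ⁻¹' Set.Ioi c := by ext; simp
    rwa [ae_iff, hmiss]
  filter_upwards [hlb, ae_all_iff.2 hhit] with ω hω hhitω
  refine tendsto_order.2 ⟨fun b hb => ?_, fun b hb => ?_⟩
  · filter_upwards [eventually_ge_atTop 1] with n hn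
    have : Nonempty (Fin n) := Fin.pos_iff_nonempty.1 hn
    exact hb.trans_le (le_ciInf fun i => hω i)
  · obtain ⟨k, hk⟩ := exists_nat_one_div_lt (sub_pos.2 hb)
    obtain ⟨i, hi⟩ := hhitω k
    filter_upwards [eventually_gt_atTop i] with n hn
    calc (⨅ i' : Fin n, Y i' ω) ≤ Y i ω :=
          ciInf_le (Set.finite_range _).bddBelow (⟨i, hn⟩ : Fin n)
      _ < b := by linarith

/-- Hoeffding's inequality for the centred indicators `p - 1_S (Y i) ∈ [p - 1, p]`. -/
lemma measureReal_sum_indicator_le_le_exp [IsProbabilityMeasure μ] {Y : ℕ → Ω → β}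
    (hind : iIndepFun Y μ) (hY : ∀ i, Measurable (Y i)) {S : Set β} (hS : MeasurableSet S) {p : ℝ}
    (hp : ∀ i, μ.real (Y i ⁻¹' S) = p) (n : ℕ) :
    μ.real {ω | ∑ i ∈ range n, S.indicator 1 (Y i ω) ≤ p / 2 * n}
      ≤ Real.exp (-(p ^ 2 / 2 * n)) := by
  set W : ℕ → Ω → ℝ := fun i ω => p - S.indicator 1 (Y i ω)
  have hsubG (i : ℕ) : HasSubgaussianMGF (W i) (1 / 4) μ := by
    have hmeas : Measurable fun ω => -S.indicator (1 : β → ℝ) (Y i ω) :=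
      ((measurable_const.indicator hS).comp (hY i)).neg
    have hmean : μ[fun ω => -S.indicator (1 : β → ℝ) (Y i ω)] = -p := by
      rw [integral_neg, ← hp i, ← integral_indicator_one ((hY i) hS)]
      rfl
    have hIcc : ∀ ω, -S.indicator (1 : β → ℝ) (Y i ω) ∈ Set.Icc (-1) 0 := fun ω => by
      by_cases h : Y i ω ∈ S <;> simp [h]
    have h := hasSubgaussianMGF_of_mem_Icc hmeas.aemeasurable (ae_of_all μ hIcc)
    rw [hmean] at h
    convert h using 1
    · ext ω; simp only [W]; ring
    · norm_num
  have hind' : iIndepFun W μ :=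
    hind.comp (fun _ x => p - S.indicator 1 x) fun _ => measurable_const.sub
      (measurable_const.indicator hS)
  have hp0 : 0 ≤ p := hp 0 ▸ measureReal_nonneg
  have h := HasSubgaussianMGF.measure_sum_range_ge_le_of_iIndepFun hind' (n := n)
    (fun i _ => hsubG i) (ε := p * n / 2) (by positivity)
  refine le_trans (measureReal_mono fun ω hω => ?_) (h.trans_eq ?_)
  · simp only [Set.mem_ofPred_eq, W, Finset.sum_sub_distrib, sum_const, card_range,
      nsmul_eq_mul] at hω ⊢
    linarith
  · congr 1
    push_cast
    rcases n.eq_zero_or_pos with rfl | hn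
    · simp
    · field_simp
      ring

/-- A substitute for uniform integrability: truncated at a level above `K` and `L`, the `f n`
converge by dominated convergence, and the truncation costs at most `M n * μ (B n)`. -/
lemma tendsto_integral_of_tendsto_ae_of_le_off [IsProbabilityMeasure μ] {f : ℕ → Ω → ℝ}
    {L K : ℝ} {M : ℕ → ℝ} {B : ℕ → Set Ω} (hf : ∀ n, AEStronglyMeasurable (f n) μ)
    (hlim : ∀ᵐ ω ∂μ, Tendsto (fun n => f n ω) atTop (𝓝 L))
    (hnonneg : ∀ n, ∀ᵐ ω ∂μ, 0 ≤ f n ω) (hle : ∀ n, ∀ᵐ ω ∂μ, f n ω ≤ M n)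
    (hB : ∀ n, MeasurableSet (B n)) (hgood : ∀ n, ∀ᵐ ω ∂μ, ω ∉ B n → f n ω ≤ K)
    (hbad : Tendsto (fun n => M n * μ.real (B n)) atTop (𝓝 0)) :
    Tendsto (fun n => ∫ ω, f n ω ∂μ) atTop (𝓝 L) := by
  set C := max (max K L) 0
  have hKC : K ≤ C := (le_max_left _ _).trans (le_max_left _ _)
  have hLC : L ≤ C := (le_max_right _ _).trans (le_max_left _ _)
  have hC : 0 ≤ C := le_max_right _ _
  have hfint (n : ℕ) : Integrable (f n) μ :=
    (integrable_const (M n)).mono' (hf n) <| by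
      filter_upwards [hnonneg n, hle n] with ω h0 h1
      rwa [Real.norm_eq_abs, abs_of_nonneg h0]
  have hgint (n : ℕ) : Integrable (fun ω => min (f n ω) C) μ :=
    (hfint n).mono' ((hf n).inf aestronglyMeasurable_const) <| by
      filter_upwards [hnonneg n] with ω h0
      rw [Real.norm_eq_abs, abs_of_nonneg (le_min h0 hC)]
      exact min_le_left _ _
  have htrunc : Tendsto (fun n => ∫ ω, min (f n ω) C ∂μ) atTop (𝓝 L) := by
    have h := tendsto_integral_of_dominated_convergence (fun _ => C)
      (fun n => (hgint n).aestronglyMeasurable) (integrable_const C)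
      (fun n => by
        filter_upwards [hnonneg n] with ω h0
        rw [Real.norm_eq_abs, abs_of_nonneg (le_min h0 hC)]
        exact min_le_right _ _)
      (by filter_upwards [hlim] with ω hω using hω.min tendsto_const_nhds)
    simpa [min_eq_left hLC] using h
  have hlower (n : ℕ) : ∫ ω, min (f n ω) C ∂μ ≤ ∫ ω, f n ω ∂μ :=
    integral_mono (hgint n) (hfint n) fun ω => min_le_left _ _
  have hupper (n : ℕ) :
      ∫ ω, f n ω ∂μ ≤ ∫ ω, min (f n ω) C ∂μ + M n * μ.real (B n) := by
    rw [mul_comm, ← smul_eq_mul, ← integral_indicator_const _ (hB n),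
      ← integral_add (hgint n) ((integrable_const _).indicator (hB n))]
    refine integral_mono_ae (hfint n) ((hgint n).add ((integrable_const _).indicator (hB n))) ?_
    filter_upwards [hnonneg n, hle n, hgood n] with ω h0 hM hK
    by_cases hω : ω ∈ B n
    · simp only [Set.indicator_of_mem hω]
      linarith [le_min h0 hC]
    · simp only [Set.indicator_of_notMem hω, add_zero]
      exact le_min le_rfl ((hK hω).trans hKC)
  exact tendsto_of_tendsto_of_tendsto_of_le_of_le htrunc (by simpa using htrunc.add hbad)
    hlower hupper

section Support

variable {ν : Measure ℝ} {a : ℝ}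

lemma integrable_one_div_of_measure_Iio_eq_zero [IsFiniteMeasure ν] (ha : 0 < a)
    (hν : ν (Set.Iio a) = 0) : Integrable (fun t => 1 / t) ν :=
  (integrable_const a⁻¹).mono' (measurable_const.div measurable_id).aestronglyMeasurable <|
    (ae_le_of_measure_Iio_eq_zero hν).mono fun t ht => by
      rw [Real.norm_eq_abs, abs_of_pos (one_div_pos.2 (ha.trans_le ht)), one_div]
      exact inv_anti₀ ha ht

lemma integral_one_div_pos [IsProbabilityMeasure ν] (ha : 0 < a) (hν : ν (Set.Iio a) = 0) :
    0 < ∫ t, 1 / t ∂ν := by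
  have hIci : ν (Set.Ici a) = 1 := by
    rwa [← prob_compl_eq_zero_iff measurableSet_Ici, Set.compl_Ici]
  rw [integral_pos_iff_support_of_nonneg_ae
    ((ae_le_of_measure_Iio_eq_zero hν).mono fun t ht => (one_div_pos.2 (ha.trans_le ht)).le)
    (integrable_one_div_of_measure_Iio_eq_zero ha hν)]
  calc (0 : ℝ≥0∞) < ν (Set.Ici a) := by simp [hIci]
    _ ≤ _ := measure_mono fun t ht => one_div_ne_zero (ha.trans_le ht).ne'

end Support

lemma tendsto_mul_measureReal_iUnion_sum_indicator_le {ι : Type*} [Fintype ι]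
    [IsProbabilityMeasure μ] {Y : ℕ → ι → Ω → β} (hind : ∀ j, iIndepFun (fun i => Y i j) μ)
    (hY : ∀ i j, Measurable (Y i j)) {S : ι → Set β} (hS : ∀ j, MeasurableSet (S j))
    {p : ι → ℝ} (hp0 : ∀ j, 0 < p j) (hp : ∀ i j, μ.real (Y i j ⁻¹' S j) = p j) :
    Tendsto (fun n : ℕ => n * μ.real
      (⋃ j, {ω | ∑ i ∈ range n, (S j).indicator 1 (Y i j ω) ≤ p j / 2 * n})) atTop (𝓝 0) := by
  have hexp (c : ℝ) (hc : 0 < c) :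
      Tendsto (fun n : ℕ => (n : ℝ) * Real.exp (-(c * n))) atTop (𝓝 0) := by
    have h := ((Real.tendsto_pow_mul_exp_neg_atTop_nhds_zero 1).comp
      (tendsto_natCast_atTop_atTop.const_mul_atTop hc)).const_mul c⁻¹
    refine (h.congr fun n => ?_).trans (by simp)
    simp only [Function.comp_apply, pow_one]
    field_simp
  refine squeeze_zero (fun n => mul_nonneg n.cast_nonneg measureReal_nonneg) (fun n => ?_)
    (by simpa using tendsto_finsetSum univ fun j _ => hexp (p j ^ 2 / 2) (by positivity [hp0 j]))
  rw [← mul_sum]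
  gcongr
  refine (measureReal_iUnion_fintype_le _).trans (sum_le_sum fun j _ => ?_)
  exact measureReal_sum_indicator_le_le_exp (hind j) (hY · j) (hS j) (hp · j) n

end Probability

lemma SCP_eq_inv_div (n : ℕ) (x : ℕ → ℝ) :
    SCP n (fun i : Fin n => x i) = ((∑ i ∈ range n, 1 / x i) / n)⁻¹ := by
  rw [SCP, inv_div, Fin.sum_univ_eq_sum_range (fun i => 1 / x i)]

lemma SCP_nonneg {n : ℕ} {t : Fin n → ℝ} (ht : ∀ k, 0 ≤ t k) : 0 ≤ SCP n t :=
  div_nonneg n.cast_nonneg (sum_nonneg fun k _ => one_div_nonneg.2 (ht k))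

lemma SCP_le_mul_iInf {n : ℕ} {t : Fin n → ℝ} (ht : ∀ k, 0 < t k) :
    SCP n t ≤ n * ⨅ k, t k := by
  rcases n.eq_zero_or_pos with rfl | hn
  · simp [SCP]
  have : Nonempty (Fin n) := Fin.pos_iff_nonempty.1 hn
  obtain ⟨k₀, hk₀⟩ := Finite.exists_min t
  have hmin : (⨅ k, t k) = t k₀ := le_antisymm (ciInf_le (Set.finite_range t).bddBelow k₀)
    (le_ciInf hk₀)
  have hsum : 1 / t k₀ ≤ ∑ k, 1 / t k :=
    single_le_sum (f := fun k => 1 / t k) (fun k _ => (one_div_pos.2 (ht k)).le) (mem_univ k₀)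
  rw [SCP, hmin, div_le_iff₀ ((one_div_pos.2 (ht k₀)).trans_le hsum)]
  calc (n : ℝ) = n * t k₀ * (1 / t k₀) := by field_simp [(ht k₀).ne']
    _ ≤ n * t k₀ * ∑ k, 1 / t k := by gcongr; exact mul_nonneg n.cast_nonneg (ht k₀).le

/-- Each cost at most `b` contributes at least `1 / b` to `∑ 1/t`. -/
lemma SCP_le_div_of_lt_sum_indicator {n : ℕ} {x : ℕ → ℝ} (hx : ∀ i, 0 < x i) {b c : ℝ}
    (hb : 0 < b) (hc : 0 < c) (hcount : c * n < ∑ i ∈ range n, (Set.Iic b).indicator 1 (x i)) :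
    SCP n (fun i : Fin n => x i) ≤ b / c := by
  have hind : ∑ i ∈ range n, (Set.Iic b).indicator 1 (x i) ≤ b * ∑ i ∈ range n, 1 / x i := by
    rw [mul_sum]
    refine sum_le_sum fun i _ => ?_
    by_cases hi : x i ≤ b
    · rw [Set.indicator_of_mem (Set.mem_Iic.2 hi), Pi.one_apply, mul_one_div,
        le_div_iff₀ (hx i), one_mul]
      exact hi
    · rw [Set.indicator_of_notMem (by simpa using hi)]
      exact (mul_pos hb (one_div_pos.2 (hx i))).le
  have hpos : 0 < ∑ i ∈ range n, 1 / x i :=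
    pos_of_mul_pos_right ((mul_nonneg hc.le n.cast_nonneg).trans_lt (hcount.trans_le hind)) hb.le
  rw [SCP_eq_inv_div, inv_div, div_le_div_iff₀ hpos hc]
  linarith

lemma ae_tendsto_SCP {Ω : Type*} [MeasurableSpace Ω] {μ : Measure Ω} [IsProbabilityMeasure μ]
    {Y : ℕ → Ω → ℝ} (hind : iIndepFun Y μ) (hY : ∀ i, Measurable (Y i)) {ν : Measure ℝ}
    [IsProbabilityMeasure ν]
    (hlaw : ∀ i, μ.map (Y i) = ν) {a : ℝ} (ha : 0 < a) (hν : ν (Set.Iio a) = 0) :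
    ∀ᵐ ω ∂μ, Tendsto (fun n => SCP n (fun i : Fin n => Y i ω)) atTop
      (𝓝 (∫ t, 1 / t ∂ν)⁻¹) := by
  have hmeas : Measurable fun t : ℝ => 1 / t := measurable_const.div measurable_id
  have hint : Integrable (fun ω => 1 / Y 0 ω) μ := by
    have h := integrable_one_div_of_measure_Iio_eq_zero ha hν
    rwa [← hlaw 0, integrable_map_measure hmeas.aestronglyMeasurable (hY 0).aemeasurable] at h
  have hmean : ∫ ω, 1 / Y 0 ω ∂μ = ∫ t, 1 / t ∂ν := by
    rw [← hlaw 0, integral_map (hY 0).aemeasurable hmeas.aestronglyMeasurable]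
  have hslln := strong_law_ae_real (fun i ω => 1 / Y i ω) hint
    (fun i i' h => (hind.indepFun h).comp hmeas hmeas)
    (fun i => (IdentDistrib.mk (hY i).aemeasurable (hY 0).aemeasurable
      (by rw [hlaw, hlaw])).comp hmeas)
  filter_upwards [hslln] with ω hω
  rw [hmean] at hω
  exact (hω.inv₀ (integral_one_div_pos ha hν).ne').congr fun n =>
    (SCP_eq_inv_div n (Y · ω)).symm

/-- The ratio `(∑_j SC_P(t^j)) / (∑_j min_i t_i^j)` on the first `n` machines, whose expectation
is `r_n(P)`. -/
noncomputable def ratioP {m : ℕ} (n : ℕ) (x : ℕ → Fin m → ℝ) : ℝ :=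
  (∑ j, SCP n (fun i : Fin n => x i j)) / ∑ j, ⨅ i : Fin n, x i j

section ratioP

variable {m : ℕ} {x : ℕ → Fin m → ℝ} {a : Fin m → ℝ}

lemma tendsto_ratioP {s : Fin m → ℝ}
    (hSC : ∀ j, Tendsto (fun n => SCP n (fun i : Fin n => x i j)) atTop (𝓝 (s j)))
    (hmin : ∀ j, Tendsto (fun n => ⨅ i : Fin n, x i j) atTop (𝓝 (a j))) (ha : ∑ j, a j ≠ 0) :
    Tendsto (fun n => ratioP n x) atTop (𝓝 ((∑ j, s j) / ∑ j, a j)) :=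
  (tendsto_finsetSum _ fun j _ => hSC j).div (tendsto_finsetSum _ fun j _ => hmin j) ha

variable (hx : ∀ i j, a j ≤ x i j)
include hx

lemma sum_le_sum_iInf {n : ℕ} (hn : n ≠ 0) :
    ∑ j, a j ≤ ∑ j, ⨅ i : Fin n, x i j :=
  have : Nonempty (Fin n) := ⟨⟨0, Nat.pos_of_ne_zero hn⟩⟩
  sum_le_sum fun j _ => le_ciInf fun i => hx i j

variable (ha : ∀ j, 0 < a j)
include ha

lemma ratioP_nonneg (n : ℕ) : 0 ≤ ratioP n x :=
  div_nonneg (sum_nonneg fun j _ => SCP_nonneg fun i => (ha j).le.trans (hx i j))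
    (sum_nonneg fun j _ => Real.iInf_nonneg fun i => (ha j).le.trans (hx i j))

lemma ratioP_le_natCast [Nonempty (Fin m)] (n : ℕ) : ratioP n x ≤ n := by
  rcases eq_or_ne n 0 with rfl | hn
  · simp [ratioP, SCP]
  have hden : 0 < ∑ j, ⨅ i : Fin n, x i j :=
    (sum_pos (fun j _ => ha j) univ_nonempty).trans_le (sum_le_sum_iInf hx hn)
  rw [ratioP, div_le_iff₀ hden, mul_sum]
  exact sum_le_sum fun j _ => SCP_le_mul_iInf fun i => (ha j).trans_le (hx i j)

lemma ratioP_le_of_SCP_le [Nonempty (Fin m)] {n : ℕ} {C : Fin m → ℝ}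
    (hC : ∀ j, SCP n (fun i : Fin n => x i j) ≤ C j) :
    ratioP n x ≤ (∑ j, C j) / ∑ j, a j := by
  have hSC (j : Fin m) : 0 ≤ SCP n (fun i : Fin n => x i j) :=
    SCP_nonneg fun i => (ha j).le.trans (hx i j)
  rcases eq_or_ne n 0 with rfl | hn
  · simp only [ratioP, SCP, CharP.cast_eq_zero, zero_div, sum_const_zero]
    exact div_nonneg (sum_nonneg fun j _ => (hSC j).trans (hC j))
      (sum_nonneg fun j _ => (ha j).le)
  exact div_le_div₀ (sum_nonneg fun j _ => (hSC j).trans (hC j)) (sum_le_sum fun j _ => hC j)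
    (sum_pos (fun j _ => ha j) univ_nonempty) (sum_le_sum_iInf hx hn)

lemma ratioP_le_of_lt_sum_indicator [Nonempty (Fin m)] {n : ℕ} {b c : Fin m → ℝ}
    (hb : ∀ j, 0 < b j) (hc : ∀ j, 0 < c j)
    (hcount : ∀ j, c j * n < ∑ i ∈ range n, (Set.Iic (b j)).indicator 1 (x i j)) :
    ratioP n x ≤ (∑ j, b j / c j) / ∑ j, a j :=
  ratioP_le_of_SCP_le hx ha fun j => SCP_le_div_of_lt_sum_indicator
    (fun i => (ha j).trans_le (hx i j)) (hb j) (hc j) (hcount j)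

end ratioP

lemma measurable_ratioP {Ω : Type*} [MeasurableSpace Ω] {m : ℕ} {X : ℕ → Fin m → Ω → ℝ}
    (hX : ∀ i j, Measurable (X i j)) (n : ℕ) :
    Measurable fun ω => ratioP n (fun i j => X i j ω) := by
  unfold ratioP SCP
  fun_prop

lemma ae_tendsto_ratioP {Ω : Type*} [MeasurableSpace Ω] {μ : Measure Ω} [IsProbabilityMeasure μ]
    {m : ℕ} {X : ℕ → Fin m → Ω → ℝ} (hind : ∀ j, iIndepFun (fun i => X i j) μ)
    (hX : ∀ i j, Measurable (X i j)) {D : Fin m → Measure ℝ} [∀ j, IsProbabilityMeasure (D j)]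
    (hlaw : ∀ i j, μ.map (X i j) = D j) {a : Fin m → ℝ} (ha : ∀ j, 0 < a j)
    (hD : ∀ j, D j (Set.Iio (a j)) = 0) (hDpos : ∀ j c, a j < c → 0 < D j (Set.Iic c))
    (hlb : ∀ᵐ ω ∂μ, ∀ i j, a j ≤ X i j ω) :
    ∀ᵐ ω ∂μ, Tendsto (fun n => ratioP n (fun i j => X i j ω)) atTop
      (𝓝 ((∑ j, (∫ t, 1 / t ∂(D j))⁻¹) / ∑ j, a j)) := by
  filter_upwards [ae_all_iff.2 fun j => ae_tendsto_SCP (hind j) (hX · j) (hlaw · j) (ha j) (hD j),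
    ae_all_iff.2 fun j => ae_tendsto_iInf_fin (hind j) (hX · j) (hlaw · j)
      (hlb.mono fun ω h i => h i j) (hDpos j)] with ω hSC hmin
  rcases isEmpty_or_nonempty (Fin m) with hm | hm
  · simp [ratioP]
  exact tendsto_ratioP hSC hmin (sum_pos (fun j _ => ha j) univ_nonempty).ne'

/-- With `m ≥ 1` tasks, costs `X i j ∼ D j` mutually independent, `D j` a
probability distribution on `[tmin j, ∞)` whose CDF is positive just above `tmin j`, the
average-case approximation ratio `r_n(P) = E[(∑_j SC_P(t^j)) / (∑_j min_i t_i^j)]` of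
mechanism P converges to the same constant as mechanism K: `(∑_j (E_{t∼D^j}[1/t])⁻¹) / (∑_j tmin j)`. -/
theorem mechanismP_average_ratio_tendsto
    {Ω : Type*} [MeasureSpace Ω] [IsProbabilityMeasure (ℙ : Measure Ω)]
    (m : ℕ) (hm : 1 ≤ m)
    (tmin : Fin m → ℝ) (htmin : ∀ j, 0 < tmin j)
    (D : Fin m → Measure ℝ) (hprob : ∀ j, IsProbabilityMeasure (D j))
    (hsupp : ∀ j, D j (Set.Iio (tmin j)) = 0)
    (hcdf : ∀ j, ∀ δ : ℝ, 0 < δ → 0 < D j (Set.Iic (tmin j + δ)))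
    (X : ℕ → Fin m → Ω → ℝ)
    (hmeas : ∀ i j, Measurable (X i j))
    (hindep : iIndepFun (fun p : ℕ × Fin m => X p.1 p.2) ℙ)
    (hdist : ∀ i j, Measure.map (X i j) ℙ = D j)
    (r : ℕ → ℝ)
    (hr : ∀ n, r n = ∫ ω, (∑ j, SCP n (fun i : Fin n => X i j ω)) /
        (∑ j, ⨅ i : Fin n, X i j ω) ∂ℙ) :
    Tendsto r atTop (nhds ((∑ j, (∫ t, 1 / t ∂(D j))⁻¹) / (∑ j, tmin j))) := by
  have : Nonempty (Fin m) := Fin.pos_iff_nonempty.1 hm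
  have hXj (j : Fin m) : iIndepFun (fun i => X i j) ℙ :=
    hindep.precomp (g := fun i => (i, j)) fun _ _ h => (Prod.ext_iff.1 h).1
  have hlb : ∀ᵐ ω, ∀ i j, tmin j ≤ X i j ω := ae_all_iff.2 fun i => ae_all_iff.2 fun j =>
    ae_le_of_map_eq (hmeas i j) (hdist i j) (hsupp j)
  set b : Fin m → ℝ := fun j => tmin j + 1
  set p : Fin m → ℝ := fun j => (D j).real (Set.Iic (b j))
  have hp0 (j : Fin m) : 0 < p j :=
    ENNReal.toReal_pos (hcdf j 1 one_pos).ne' (measure_ne_top _ _)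
  have hp (i : ℕ) (j : Fin m) : (ℙ : Measure Ω).real (X i j ⁻¹' Set.Iic (b j)) = p j := by
    rw [← map_measureReal_apply (hmeas i j) measurableSet_Iic, hdist i j]
  set B : ℕ → Set Ω := fun n =>
    ⋃ j, {ω | ∑ i ∈ range n, (Set.Iic (b j)).indicator 1 (X i j ω) ≤ p j / 2 * n}
  have hgood (n : ℕ) : ∀ᵐ ω, ω ∉ B n →
      ratioP n (fun i j => X i j ω) ≤ (∑ j, b j / (p j / 2)) / ∑ j, tmin j :=
    hlb.mono fun ω hω hB => ratioP_le_of_lt_sum_indicator hω htmin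
      (fun j => by linarith [htmin j]) (fun j => half_pos (hp0 j))
      fun j => not_le.1 fun h => hB (Set.mem_iUnion.2 ⟨j, h⟩)
  rw [show r = fun n => ∫ ω, ratioP n (fun i j => X i j ω) from funext hr]
  exact tendsto_integral_of_tendsto_ae_of_le_off
    (fun n => (measurable_ratioP hmeas n).aestronglyMeasurable)
    (ae_tendsto_ratioP hXj hmeas hdist htmin hsupp
      (fun j c hc => by simpa using hcdf j (c - tmin j) (sub_pos.2 hc)) hlb)
    (fun n => hlb.mono fun ω hω => ratioP_nonneg hω htmin n)
    (fun n => hlb.mono fun ω hω => ratioP_le_natCast hω htmin n)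
    (fun n => MeasurableSet.iUnion fun j => measurableSet_le (measurable_sum _ fun i _ =>
      (measurable_const.indicator measurableSet_Iic).comp (hmeas i j)) measurable_const) hgood
    (tendsto_mul_measureReal_iUnion_sum_indicator_le hXj hmeas (fun _ => measurableSet_Iic) hp0 hp)
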